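/- Halmos unitary dilation of a matrix contraction: if T is an n×n complex matrix with ‖T‖ ≤ 1 (operator norm), then the 2n×2n block matrix V = [[T, (1 - TT*)^{1/2}], [(1 - T*T)^{1/2}, -T*]] is unitary. -/

import Mathlib

/-!
Writing `D = (1 - T*T)^{1/2}` and `D' = (1 - TT*)^{1/2}`, the product `V V*` has diagonal blocks
`TT* + D'^2 = 1` and `D^2 + T*T = 1`, and off-diagonal blocks `TD - D'T` and its adjoint. These
vanish because `T (1 - T*T) = (1 - TT*) T`, and on the finite spectra of these two matrices the
square root agrees with a single interpolating polynomial, so `T` also intertwines their square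
roots.
-/

open scoped Matrix ComplexOrder Matrix.Norms.L2Operator

/-- The square root of a positive semidefinite matrix, as `Matrix.PosSemidef.sqrt` was defined
in Mathlib (December 2024); it has since been removed from Mathlib. -/
noncomputable def Matrix.PosSemidef.sqrt {n 𝕜 : Type*} [Fintype n] [RCLike 𝕜] [DecidableEq n]
    {A : Matrix n n 𝕜} (hA : A.PosSemidef) : Matrix n n 𝕜 :=
  hA.1.eigenvectorUnitary.1 * Matrix.diagonal ((↑) ∘ (√·) ∘ hA.1.eigenvalues) *
  (star hA.1.eigenvectorUnitary : Matrix n n 𝕜)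

open Polynomial

theorem SemiconjBy.aeval {R A : Type*} [CommSemiring R] [Semiring A] [Algebra R A]
    {t a b : A} (h : SemiconjBy t a b) (p : R[X]) :
    SemiconjBy t (aeval a p) (aeval b p) := by
  induction p using Polynomial.induction_on' with
  | add p q hp hq => simpa only [map_add] using hp.add_right hq
  | monomial k c =>
    simp only [aeval_monomial]
    exact SemiconjBy.mul_right (Algebra.commutes c t).symm (h.pow_right k)

theorem SemiconjBy.cfc_of_finite_spectrum {A : Type*} [Ring A] [StarRing A] [Algebra ℝ A]
    [TopologicalSpace A] [ContinuousFunctionalCalculus ℝ A IsSelfAdjoint]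
    {t a b : A} (h : SemiconjBy t a b) (ha : IsSelfAdjoint a) (hb : IsSelfAdjoint b)
    (ha' : (spectrum ℝ a).Finite) (hb' : (spectrum ℝ b).Finite) (f : ℝ → ℝ) :
    SemiconjBy t (cfc f a) (cfc f b) := by
  classical
  set s := (ha'.union hb').toFinset
  set p := Lagrange.interpolate s id f
  have hp : ∀ c : A, spectrum ℝ c ⊆ s → cfc f c = cfc (fun x => p.eval x) c := fun c hc =>
    cfc_congr fun x hx => (Lagrange.eval_interpolate_at_node f (Set.injOn_id _) (hc hx)).symm
  rw [hp a (by simp [s]), hp b (by simp [s]), cfc_polynomial p a, cfc_polynomial p b]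
  exact h.aeval p

namespace Matrix

variable {n 𝕜 : Type*} [Fintype n] [DecidableEq n] [RCLike 𝕜]

theorem PosSemidef.sqrt_eq_cfc {A : Matrix n n 𝕜} (hA : A.PosSemidef) :
    hA.sqrt = cfc Real.sqrt A := by
  rw [hA.1.cfc_eq, IsHermitian.cfc, Unitary.conjStarAlgAut_apply]
  rfl

theorem PosSemidef.isHermitian_sqrt {A : Matrix n n 𝕜} (hA : A.PosSemidef) :
    hA.sqrt.IsHermitian := by
  rw [hA.sqrt_eq_cfc]
  exact cfc_predicate _ _

theorem PosSemidef.sqrt_mul_self {A : Matrix n n 𝕜} (hA : A.PosSemidef) :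
    hA.sqrt * hA.sqrt = A := by
  have hspec : ∀ x ∈ spectrum ℝ A, 0 ≤ x := by
    rw [hA.1.spectrum_real_eq_range_eigenvalues]
    rintro _ ⟨i, rfl⟩
    exact hA.eigenvalues_nonneg i
  have hA' : IsSelfAdjoint A := hA.1
  calc hA.sqrt * hA.sqrt = cfc (fun x => √x * √x) A := by rw [hA.sqrt_eq_cfc, cfc_mul _ _ A]
    _ = cfc id A := cfc_congr fun x hx => Real.mul_self_sqrt (hspec x hx)
    _ = A := cfc_id ℝ A

theorem fromBlocks_mem_unitaryGroup {R : Type*} [CommRing R] [StarRing R] (T : Matrix n n R)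
    {D D' : Matrix n n R}
    (hD : D.IsHermitian) (hD' : D'.IsHermitian) (hDD : D * D = 1 - Tᴴ * T)
    (hD'D' : D' * D' = 1 - T * Tᴴ) (hTD : T * D = D' * T) :
    fromBlocks T D' D (-Tᴴ) ∈ unitaryGroup (n ⊕ n) R := by
  have hDT : D * Tᴴ = Tᴴ * D' := by
    simpa only [conjTranspose_mul, hD.eq, hD'.eq] using congrArg conjTranspose hTD
  rw [mem_unitaryGroup_iff, star_eq_conjTranspose, fromBlocks_conjTranspose, fromBlocks_multiply,
    hD.eq, hD'.eq, conjTranspose_neg, conjTranspose_conjTranspose, hDD, hD'D', hTD, hDT,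
    ← fromBlocks_one]
  congr 1 <;> noncomm_ring

end Matrix

theorem halmos_dilation_unitary_general {n : ℕ} (T : Matrix (Fin n) (Fin n) ℂ)
    (h1 : (1 - Tᴴ * T).PosSemidef) (h2 : (1 - T * Tᴴ).PosSemidef) :
    Matrix.fromBlocks T h2.sqrt h1.sqrt (-Tᴴ) ∈
      Matrix.unitaryGroup (Fin n ⊕ Fin n) ℂ := by
  have hTA : SemiconjBy T (1 - Tᴴ * T) (1 - T * Tᴴ) := by
    simp only [SemiconjBy, mul_sub, sub_mul, mul_one, one_mul, mul_assoc]
  refine Matrix.fromBlocks_mem_unitaryGroup T h1.isHermitian_sqrt h2.isHermitian_sqrt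
    h1.sqrt_mul_self h2.sqrt_mul_self ?_
  rw [h1.sqrt_eq_cfc, h2.sqrt_eq_cfc]
  exact hTA.cfc_of_finite_spectrum h1.1 h2.1 Matrix.finite_real_spectrum
    Matrix.finite_real_spectrum _

/-- Halmos unitary dilation of a matrix contraction: if `‖T‖ ≤ 1` (operator
norm), then `[[T, (1 - TT*)^{1/2}], [(1 - T*T)^{1/2}, -T*]]` is unitary. -/
theorem halmos_dilation_unitary {n : ℕ} (T : Matrix (Fin n) (Fin n) ℂ)
    (hT : ‖T‖ ≤ 1)
    (h1 : (1 - Tᴴ * T).PosSemidef) (h2 : (1 - T * Tᴴ).PosSemidef) :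
    Matrix.fromBlocks T h2.sqrt h1.sqrt (-Tᴴ) ∈
      Matrix.unitaryGroup (Fin n ⊕ Fin n) ℂ :=
  halmos_dilation_unitary_general T h1 h2
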